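/- arXiv:2503.16255 — 3 statements merged into one kernel-verified Lean document; each statement's English description precedes it below -/
import Mathlib

section
/- Suppose g > 8 and d is an integer with g/3 + 3 ≤ d < ⌊(g+4)/2⌋. Then with k = ⌊d/2⌋, the inequality ρ(g,1,k) > ρ(g,2,d) holds, where ρ(g,r,d) = g−(r+1)(g−d+r). -/
/-- Brill--Noether number. -/
def rho (g r d : ℤ) : ℤ := g - (r + 1) * (g - d + r)

theorem rho_one_sub_rho_two (g k d : ℤ) :
    rho g 1 k - rho g 2 d = g + 2 * k + 4 - 3 * d := by
  unfold rho
  ring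

theorem two_mul_le_of_lt_add_four_ediv_two {g d : ℤ} (hd : d < (g + 4) / 2) :
    2 * d ≤ g + 2 := by
  have h := (Int.le_ediv_iff_mul_le two_pos).1 (Int.add_one_le_iff.2 hd)
  linarith

theorem stmt_8_general (g d : ℤ) (hd2 : d < (g + 4) / 2) :
    rho g 1 (d / 2) > rho g 2 d := by
  have hg := two_mul_le_of_lt_add_four_ediv_two hd2
  have hk : d < (d / 2 + 1) * 2 := Int.lt_ediv_add_one_mul_self d two_pos
  rw [gt_iff_lt, ← sub_pos, rho_one_sub_rho_two]
  linarith

theorem stmt_8 (g d : ℤ) (hg : 8 < g)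
    (hd1 : (g : ℚ) / 3 + 3 ≤ (d : ℚ)) (hd2 : d < (g + 4) / 2) :
    rho g 1 (d / 2) > rho g 2 d :=
  stmt_8_general g d hd2
end

section
/- In a 2×(g−k+1) grid filled with integers 1,…,g with strictly increasing rows and columns, where an integer may appear at most twice (once in each row), the grid-distance between the two appearances of any repeated integer is at most k. -/
/-! A strictly increasing row of naturals climbs by at least one per step. If the top entry in
column `j₁` equals the bottom entry in column `j₂`, then `j₂ < j₁` because columns increase, the
value is at least `1 + j₁` (counting up the top row from its first entry `≥ 1`) and at most
`g - (g - k - j₂)` (counting down the bottom row from its last entry `≤ g`), so `j₁ - j₂ + 1 ≤ k`. -/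

theorem Monotone.lt_of_apply_eq_of_lt {α β : Type*} [LinearOrder α] [Preorder β]
    {u v : α → β} (hu : Monotone u) {a b : α} (hab : u a = v b) (hb : u b < v b) : b < a :=
  lt_of_not_ge fun hle => (hab ▸ hu hle).not_gt hb

theorem StrictMono.card_Icc_le {α : Type*} [LinearOrder α] [LocallyFiniteOrder α] {f : α → ℕ}
    (hf : StrictMono f) (a b : α) : (Finset.Icc a b).card ≤ f b + 1 - f a := by
  rw [← Nat.card_Icc]
  refine Finset.card_le_card_of_injOn f (fun x hx => ?_) hf.injective.injOn
  obtain ⟨hax, hxb⟩ := Finset.mem_Icc.mp hx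
  exact Finset.mem_Icc.mpr ⟨hf.monotone hax, hf.monotone hxb⟩

theorem stmt_14_general (g k : ℕ)
    (f : Fin 2 → Fin (g - k + 1) → ℕ)
    (hval : ∀ i j, f i j ∈ Finset.Icc 1 g)
    (hrow : ∀ i, StrictMono (f i))
    (hcol : ∀ j, f 0 j < f 1 j)
    (j₁ j₂ : Fin (g - k + 1)) (hrep : f 0 j₁ = f 1 j₂) :
    |(j₁ : ℤ) - (j₂ : ℤ)| + 1 ≤ (k : ℤ) := by
  have hlt : j₂ < j₁ := (hrow 0).monotone.lt_of_apply_eq_of_lt hrep (hcol j₂)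
  have hbelow := (hrow 0).card_Icc_le 0 j₁
  have habove := (hrow 1).card_Icc_le j₂ (Fin.last _)
  rw [Fin.card_Icc] at hbelow habove
  have hfirst := Finset.mem_Icc.mp (hval 0 0)
  have hlast := Finset.mem_Icc.mp (hval 1 (Fin.last _))
  rw [Fin.lt_def] at hlt
  rw [abs_of_nonneg (by omega)]
  simp only [Fin.val_zero, Fin.val_last] at hbelow habove
  omega

theorem stmt_14 (g k : ℕ) (hk : 1 ≤ k) (hkg : k ≤ g)
    (f : Fin 2 → Fin (g - k + 1) → ℕ)
    (hval : ∀ i j, f i j ∈ Finset.Icc 1 g)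
    (hrow : ∀ i, StrictMono (f i))
    (hcol : ∀ j, f 0 j < f 1 j)
    (j₁ j₂ : Fin (g - k + 1)) (hrep : f 0 j₁ = f 1 j₂) :
    |(j₁ : ℤ) - (j₂ : ℤ)| + 1 ≤ (k : ℤ) :=
  stmt_14_general g k f hval hrow hcol j₁ j₂ hrep
end

section
/- Let D be a smooth curve of genus 2 with hyperelliptic involution ι, and let R₁, R₃, R₅, R₇, P, Q be points on D such that the divisor classes satisfy R₃−R₁ ∼ R₅−R₃ ∼ R₇−R₅ ∼ 2P−2Q (linear equivalence), and K_D ∼ R₁+R₇ ∼ R₃+R₅ where K_D is the canonical class. Then R₁ = R₃ = R₅ = R₇ is a Weierstrass point of D, and 2P ∼ 2Q, so P and Q are Weierstrass points. -/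
/-!
Subtracting the given relations shows that `R₁, R₃, R₅` is an arithmetic progression,
`2 R₃ ∼ R₁ + R₅`, while `R₅ = ι R₃`. The divisor `2 R₃` moves in a pencil only if it is
canonical, so either `R₁ = R₅ = R₃` or `R₃` is a Weierstrass point and `R₅ = ι R₃ = R₃`;
either way the common difference `2P - 2Q` vanishes, hence all `Rᵢ` coincide. Finally
`2P ∼ 2Q` with `P ≠ Q` makes `2P` a moving divisor, hence canonical.
-/

namespace Genus2

variable {Point Cl : Type*} [AddCommGroup Cl] {cl : Point → Cl} {K : Cl} {ι : Point → Point}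

theorem eq_of_pair_eq_pair_self {M A B : Point} (h : ({M, M} : Multiset Point) = {A, B}) :
    A = M ∧ B = M := by
  have hA : A ∈ ({M, M} : Multiset Point) := by rw [h]; simp
  have hB : B ∈ ({M, M} : Multiset Point) := by rw [h]; simp
  simp only [Multiset.insert_eq_cons, Multiset.mem_cons, Multiset.mem_singleton, or_self] at hA hB
  exact ⟨hA, hB⟩

theorem iota_involutive (hcan : ∀ R R' : Point, cl R + cl R' = K ↔ R' = ι R) :
    Function.Involutive ι := by
  intro A
  have hA : cl A + cl (ι A) = K := (hcan A (ι A)).mpr rfl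
  exact ((hcan (ι A) A).mp (by rwa [add_comm])).symm

theorem cl_injective (hcan : ∀ R R' : Point, cl R + cl R' = K ↔ R' = ι R) :
    Function.Injective cl := by
  intro A B h
  have hB : cl (ι A) + cl B = K := by rw [← h, add_comm]; exact (hcan A (ι A)).mpr rfl
  rw [(hcan (ι A) B).mp hB, iota_involutive hcan A]

theorem eq_and_eq_or_iota_eq_self_of_double_eq_add
    (hcan : ∀ R R' : Point, cl R + cl R' = K ↔ R' = ι R)
    (hpair : ∀ A B A' B' : Point, cl A + cl B = cl A' + cl B' →
      ({A, B} : Multiset Point) = {A', B'} ∨ cl A + cl B = K)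
    {M A B : Point} (h : cl M + cl M = cl A + cl B) :
    (A = M ∧ B = M) ∨ ι M = M := by
  rcases hpair M M A B h with h | h
  · exact .inl (eq_of_pair_eq_pair_self h)
  · exact .inr ((hcan M M).mp h).symm

theorem eq_of_double_eq_add_of_add_eq_canonical
    (hcan : ∀ R R' : Point, cl R + cl R' = K ↔ R' = ι R)
    (hpair : ∀ A B A' B' : Point, cl A + cl B = cl A' + cl B' →
      ({A, B} : Multiset Point) = {A', B'} ∨ cl A + cl B = K)
    {M A B : Point} (h : cl M + cl M = cl A + cl B) (hK : cl M + cl B = K) :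
    B = M := by
  rcases eq_and_eq_or_iota_eq_self_of_double_eq_add hcan hpair h with ⟨-, hB⟩ | hM
  · exact hB
  · rw [(hcan M B).mp hK, hM]

theorem iota_eq_self_of_double_eq_double
    (hcan : ∀ R R' : Point, cl R + cl R' = K ↔ R' = ι R)
    (hpair : ∀ A B A' B' : Point, cl A + cl B = cl A' + cl B' →
      ({A, B} : Multiset Point) = {A', B'} ∨ cl A + cl B = K)
    {P Q : Point} (hPQ : P ≠ Q) (h : cl P + cl P = cl Q + cl Q) :
    ι P = P := by
  rcases eq_and_eq_or_iota_eq_self_of_double_eq_add hcan hpair h with ⟨hQ, -⟩ | hP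
  · exact absurd hQ.symm hPQ
  · exact hP

end Genus2

open Genus2 in
/-- `cl R` is the class of the point `R` in the divisor class group `Cl`, `K` the canonical
class and `ι` the hyperelliptic involution; `unique_pair` says that a non-canonical degree-2
class has at most one effective representative. -/
theorem stmt_15_general {Point Cl : Type*} [AddCommGroup Cl]
    (cl : Point → Cl) (K : Cl) (ι : Point → Point)
    (canonical_pair : ∀ R R' : Point, cl R + cl R' = K ↔ R' = ι R)
    (unique_pair : ∀ A B A' B' : Point, cl A + cl B = cl A' + cl B' →
      ({A, B} : Multiset Point) = {A', B'} ∨ cl A + cl B = K)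
    (R₁ R₃ R₅ R₇ P Q : Point) (hPQ : P ≠ Q)
    (h₁₃ : cl R₃ - cl R₁ = cl P + cl P - (cl Q + cl Q))
    (h₃₅ : cl R₅ - cl R₃ = cl P + cl P - (cl Q + cl Q))
    (h₅₇ : cl R₇ - cl R₅ = cl P + cl P - (cl Q + cl Q))
    (hK₃₅ : cl R₃ + cl R₅ = K) :
    R₁ = R₃ ∧ R₃ = R₅ ∧ R₅ = R₇ ∧ ι R₁ = R₁ ∧
      cl P + cl P = cl Q + cl Q ∧ ι P = P ∧ ι Q = Q := by
  have hmid : cl R₃ + cl R₃ = cl R₁ + cl R₅ := by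
    rw [add_comm (cl R₁)]; exact sub_eq_sub_iff_add_eq_add.mp (h₁₃.trans h₃₅.symm)
  have h₅ : R₅ = R₃ := eq_of_double_eq_add_of_add_eq_canonical canonical_pair unique_pair hmid hK₃₅
  have hd : cl P + cl P - (cl Q + cl Q) = 0 := by rw [← h₃₅, h₅, sub_self]
  have h₁ : R₃ = R₁ := cl_injective canonical_pair (sub_eq_zero.mp (h₁₃.trans hd))
  have h₇ : R₇ = R₅ := cl_injective canonical_pair (sub_eq_zero.mp (h₅₇.trans hd))
  have hPQ₂ : cl P + cl P = cl Q + cl Q := sub_eq_zero.mp hd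
  have hW : ι R₁ = R₁ := by
    rw [← h₁]; exact ((canonical_pair R₃ R₃).mp (h₅ ▸ hK₃₅)).symm
  exact ⟨h₁.symm, h₅.symm, h₇.symm, hW, hPQ₂,
    iota_eq_self_of_double_eq_double canonical_pair unique_pair hPQ hPQ₂,
    iota_eq_self_of_double_eq_double canonical_pair unique_pair hPQ.symm hPQ₂.symm⟩

/-- Abstract divisor-class data of a smooth genus-2 curve: `Point` is the set of points,
`Cl` its divisor class group, `cl R` the class of the degree-1 divisor `R`, `K` the
canonical class, and `ι` the hyperelliptic involution.  The axiom `canonical_pair`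
says `R + R' ∼ K_D` iff `R' = ι R`; the axiom `unique_pair` says that a degree-2 class
with two distinct effective representatives is the canonical class. -/
theorem stmt_15 {Point Cl : Type*} [AddCommGroup Cl]
    (cl : Point → Cl) (K : Cl) (ι : Point → Point)
    (canonical_pair : ∀ R R' : Point, cl R + cl R' = K ↔ R' = ι R)
    (unique_pair : ∀ A B A' B' : Point, cl A + cl B = cl A' + cl B' →
      ({A, B} : Multiset Point) = {A', B'} ∨ cl A + cl B = K)
    (R₁ R₃ R₅ R₇ P Q : Point) (hPQ : P ≠ Q)
    (h₁₃ : cl R₃ - cl R₁ = cl P + cl P - (cl Q + cl Q))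
    (h₃₅ : cl R₅ - cl R₃ = cl P + cl P - (cl Q + cl Q))
    (h₅₇ : cl R₇ - cl R₅ = cl P + cl P - (cl Q + cl Q))
    (hK₁₇ : cl R₁ + cl R₇ = K)
    (hK₃₅ : cl R₃ + cl R₅ = K) :
    R₁ = R₃ ∧ R₃ = R₅ ∧ R₅ = R₇ ∧ ι R₁ = R₁ ∧
      cl P + cl P = cl Q + cl Q ∧ ι P = P ∧ ι Q = Q :=
  stmt_15_general cl K ι canonical_pair unique_pair R₁ R₃ R₅ R₇ P Q hPQ h₁₃ h₃₅ h₅₇ hK₃₅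
end
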